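/- Let K_Λ = {k ∈ ℝ^Λ : ∑_{i∈Λ} k_i = 0}. For all k ∈ K_Λ, writing k_{0ᶜ} = (k_i)_{i∈Λ∖{0}}, one has −4 k_{0ᶜ}ᵀ (Δ_{0ᶜ0ᶜ})^{−1} k_{0ᶜ} = kᵀ G k. -/

import Mathlib

open Matrix Filter

/-- The discrete two-dimensional torus `(ℤ/Nℤ)²`. -/
abbrev Torus (N : ℕ) := ZMod N × ZMod N

/-- The four nearest-neighbor steps on the torus. -/
def torusSteps (N : ℕ) : List (Torus N) := [(1, 0), (-1, 0), (0, 1), (0, -1)]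

/-- One-step transition kernel of simple random walk on the torus:
each of the four steps is taken with probability `1/4`. -/
noncomputable def srwKernel (N : ℕ) : Matrix (Torus N) (Torus N) ℝ :=
  fun i j => ((torusSteps N).count (j - i) : ℝ) / 4

/-- The lattice Laplacian on the torus: `Δ_ij = 1` for neighbors `i ∼ j`
(counted with multiplicity), `Δ_ii = -4`, and `0` otherwise. -/
noncomputable def lap (N : ℕ) : Matrix (Torus N) (Torus N) ℝ :=
  fun i j => if i = j then -4 else ((torusSteps N).count (j - i) : ℝ)

/-- The Green's function
`G_ij = lim_{λ↓0} ∑_{t≥0} (P_i(X_t = j) − 1/|Λ|) e^{−λt}` of simple random walk. -/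
noncomputable def green (N : ℕ) [NeZero N] (i j : Torus N) : ℝ :=
  limUnder (nhdsWithin (0 : ℝ) (Set.Ioi 0))
    (fun lam : ℝ =>
      ∑' t : ℕ, ((srwKernel N ^ t) i j - 1 / (N ^ 2 : ℝ)) * Real.exp (-lam * t))

/-!
Write `P` for the transition matrix of the walk and `Π` for the matrix with all entries `1/|Λ|`,
so that `Δ = -4 (1 - P)`. Since `P` is doubly stochastic, `(P - Π)(Pᵗ - Π) = Pᵗ⁺¹ - Π`, so the
Abel sums `S_c = ∑ₜ cᵗ (Pᵗ - Π)` satisfy `(1 - c (P - Π)) S_c = 1 - Π`. Irreducibility of the walk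
makes `1 - P + Π` invertible, and letting `c ↑ 1` gives `G = (1 - P + Π)⁻¹ (1 - Π)`; hence
`(1 - P) G = 1 - Π` and `Δ G k = -4 k` for `k ∈ K_Λ`.

Irreducibility also makes `Δ_{0ᶜ0ᶜ}` invertible: a vector in its kernel, extended by `0`, has
vanishing Dirichlet form and is therefore constant. As `Δ` kills constants,
`z_i = (G k)_i - (G k)_0` solves `Δ_{0ᶜ0ᶜ} z = -4 k_{0ᶜ}`, and `k_{0ᶜ} ⬝ z = kᵀ G k` because
`∑ k = 0`.
-/

open Topology

noncomputable def meanMatrix (ι : Type*) [Fintype ι] : Matrix ι ι ℝ :=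
  of fun _ _ => (Fintype.card ι : ℝ)⁻¹

/-- `∑ₜ (P ^ t - meanMatrix ι)` in the Abel sense (`tendsto_tsum_pow_sub_meanMatrix_mul_exp`);
a junk value unless `1 - (P - meanMatrix ι)` is invertible. -/
noncomputable def deviationMatrix {ι : Type*} [Fintype ι] [DecidableEq ι] (P : Matrix ι ι ℝ) :
    Matrix ι ι ℝ :=
  (1 - (P - meanMatrix ι))⁻¹ * (1 - meanMatrix ι)

theorem meanMatrix_mulVec_eq_zero {ι : Type*} [Fintype ι] {x : ι → ℝ} (hx : ∑ i, x i = 0) :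
    meanMatrix ι *ᵥ x = 0 := by
  ext i
  simp [meanMatrix, mulVec, dotProduct, ← Finset.mul_sum, hx]

section DoublyStochastic

variable {ι : Type*} [Fintype ι] [DecidableEq ι] {P : Matrix ι ι ℝ} {c : ℝ}

theorem mul_meanMatrix (hP : P ∈ doublyStochastic ℝ ι) : P * meanMatrix ι = meanMatrix ι := by
  ext i j
  simp [meanMatrix, mul_apply, ← Finset.sum_mul, sum_row_of_mem_doublyStochastic hP]

theorem meanMatrix_mul (hP : P ∈ doublyStochastic ℝ ι) : meanMatrix ι * P = meanMatrix ι := by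
  ext i j
  simp [meanMatrix, mul_apply, ← Finset.mul_sum, sum_col_of_mem_doublyStochastic hP]

theorem two_mul_dotProduct_one_sub_mulVec (hP : P ∈ doublyStochastic ℝ ι) (x : ι → ℝ) :
    2 * (x ⬝ᵥ (1 - P) *ᵥ x) = ∑ i, ∑ j, P i j * (x i - x j) ^ 2 := by
  have expand : ∀ i j, P i j * (x i - x j) ^ 2
      = x i ^ 2 * P i j + x j ^ 2 * P i j - 2 * (x i * (P i j * x j)) := fun _ _ => by ring
  simp only [expand, Finset.sum_add_distrib, Finset.sum_sub_distrib, ← Finset.mul_sum]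
  rw [Finset.sum_comm (f := fun i j => x j ^ 2 * P i j)]
  simp only [← Finset.mul_sum, ← Finset.sum_mul, sum_row_of_mem_doublyStochastic hP,
    sum_col_of_mem_doublyStochastic hP, sub_mulVec, one_mulVec, dotProduct_sub]
  simp only [dotProduct, mulVec, sq]
  ring

theorem eq_of_dotProduct_one_sub_mulVec_eq_zero (hP : P ∈ doublyStochastic ℝ ι) {x : ι → ℝ}
    (hx : x ⬝ᵥ (1 - P) *ᵥ x = 0) {i j : ι} (hij : P i j ≠ 0) : x i = x j := by
  have hsum : ∑ i, ∑ j, P i j * (x i - x j) ^ 2 = 0 := by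
    rw [← two_mul_dotProduct_one_sub_mulVec hP, hx, mul_zero]
  have hnonneg : ∀ i j, 0 ≤ P i j * (x i - x j) ^ 2 := fun i j =>
    mul_nonneg (nonneg_of_mem_doublyStochastic hP) (sq_nonneg _)
  have hterm : P i j * (x i - x j) ^ 2 = 0 :=
    (Finset.sum_eq_zero_iff_of_nonneg fun _ _ => hnonneg i _).1
      ((Finset.sum_eq_zero_iff_of_nonneg fun i _ => Finset.sum_nonneg fun j _ => hnonneg i j).1
        hsum i (Finset.mem_univ _)) j (Finset.mem_univ _)
  simpa [hij, sub_eq_zero] using hterm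

theorem abs_pow_sub_meanMatrix_apply_le_one (hP : P ∈ doublyStochastic ℝ ι) (t : ℕ) (i j : ι) :
    |(P ^ t - meanMatrix ι) i j| ≤ 1 :=
  abs_sub_le_of_nonneg_of_le (nonneg_of_mem_doublyStochastic (pow_mem hP t))
    (le_one_of_mem_doublyStochastic (pow_mem hP t)) (by simp [meanMatrix])
    (Nat.cast_inv_le_one _)

theorem summable_pow_smul_pow_sub_meanMatrix (hP : P ∈ doublyStochastic ℝ ι) (hc0 : 0 ≤ c)
    (hc1 : c < 1) : Summable fun t : ℕ => c ^ t • (P ^ t - meanMatrix ι) := by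
  refine Pi.summable.2 fun i => Pi.summable.2 fun j => ?_
  refine (summable_geometric_of_lt_one hc0 hc1).of_norm_bounded fun t => ?_
  simpa [abs_mul, abs_of_nonneg hc0] using
    mul_le_of_le_one_right (pow_nonneg hc0 t) (abs_pow_sub_meanMatrix_apply_le_one hP t i j)

variable [Nonempty ι]

theorem meanMatrix_mem_doublyStochastic : meanMatrix ι ∈ doublyStochastic ℝ ι := by
  simp [mem_doublyStochastic_iff_sum, meanMatrix]

theorem meanMatrix_mul_self : meanMatrix ι * meanMatrix ι = meanMatrix ι :=
  mul_meanMatrix meanMatrix_mem_doublyStochastic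

theorem meanMatrix_mul_one_sub_sub_meanMatrix (hP : P ∈ doublyStochastic ℝ ι) :
    meanMatrix ι * (1 - (P - meanMatrix ι)) = meanMatrix ι := by
  simp [mul_sub, meanMatrix_mul hP, meanMatrix_mul_self]

theorem isUnit_det_one_sub_sub_meanMatrix (hP : P ∈ doublyStochastic ℝ ι)
    (hconn : ∀ x : ι → ℝ, (∀ i j, P i j ≠ 0 → x i = x j) → ∀ i j, x i = x j) :
    IsUnit (1 - (P - meanMatrix ι)).det := by
  rw [isUnit_iff_ne_zero, Ne, ← exists_mulVec_eq_zero_iff]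
  rintro ⟨x, hx0, hx⟩
  have hmean : meanMatrix ι *ᵥ x = 0 := by
    rw [← meanMatrix_mul_one_sub_sub_meanMatrix hP, ← mulVec_mulVec, hx, mulVec_zero]
  have hharm : (1 - P) *ᵥ x = 0 := by
    simpa [sub_mulVec, hmean, sub_add_eq_add_sub] using hx
  have hconst := hconn x fun i j hij => eq_of_dotProduct_one_sub_mulVec_eq_zero hP
    (by rw [hharm, dotProduct_zero]) hij
  obtain ⟨o⟩ := ‹Nonempty ι›
  refine hx0 (funext fun i => ?_)
  have := congr_fun hmean o
  simp only [meanMatrix, mulVec, dotProduct, of_apply, ← Finset.mul_sum, Pi.zero_apply,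
    hconst _ i, Finset.sum_const, Finset.card_univ, nsmul_eq_mul] at this
  simpa [Fintype.card_ne_zero] using this

theorem one_sub_mul_deviationMatrix (hP : P ∈ doublyStochastic ℝ ι)
    (hdet : IsUnit (1 - (P - meanMatrix ι)).det) :
    (1 - P) * deviationMatrix P = 1 - meanMatrix ι := by
  have hmean_inv : meanMatrix ι * (1 - (P - meanMatrix ι))⁻¹ = meanMatrix ι :=
    calc meanMatrix ι * (1 - (P - meanMatrix ι))⁻¹
        = meanMatrix ι * (1 - (P - meanMatrix ι)) * (1 - (P - meanMatrix ι))⁻¹ := by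
          rw [meanMatrix_mul_one_sub_sub_meanMatrix hP]
      _ = meanMatrix ι := mul_nonsing_inv_cancel_right _ _ hdet
  have hmean_dev : meanMatrix ι * deviationMatrix P = 0 := by
    rw [deviationMatrix, ← Matrix.mul_assoc, hmean_inv, mul_sub, mul_one, meanMatrix_mul_self,
      sub_self]
  calc (1 - P) * deviationMatrix P
      = (1 - (P - meanMatrix ι)) * deviationMatrix P - meanMatrix ι * deviationMatrix P := by
        rw [← sub_mul]; abel_nf
    _ = 1 - meanMatrix ι := by
        rw [hmean_dev, sub_zero, deviationMatrix, mul_nonsing_inv_cancel_left _ _ hdet]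

theorem sub_meanMatrix_mul_pow_sub_meanMatrix (hP : P ∈ doublyStochastic ℝ ι) (t : ℕ) :
    (P - meanMatrix ι) * (P ^ t - meanMatrix ι) = P ^ (t + 1) - meanMatrix ι := by
  rw [sub_mul, mul_sub, mul_sub, mul_meanMatrix hP, meanMatrix_mul (pow_mem hP t),
    meanMatrix_mul_self, ← pow_succ']
  abel

theorem one_sub_smul_mul_tsum_pow_smul (hP : P ∈ doublyStochastic ℝ ι) (hc0 : 0 ≤ c)
    (hc1 : c < 1) :
    (1 - c • (P - meanMatrix ι)) * ∑' t : ℕ, c ^ t • (P ^ t - meanMatrix ι)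
      = 1 - meanMatrix ι := by
  have hs := summable_pow_smul_pow_sub_meanMatrix hP hc0 hc1
  set S := ∑' t : ℕ, c ^ t • (P ^ t - meanMatrix ι)
  have hshift : ∑' t : ℕ, c ^ (t + 1) • (P ^ (t + 1) - meanMatrix ι)
      = c • (P - meanMatrix ι) * S := by
    rw [← hs.tsum_mul_left]
    refine tsum_congr fun t => ?_
    rw [smul_mul_smul_comm, sub_meanMatrix_mul_pow_sub_meanMatrix hP, pow_succ']
  have hS : S = (1 - meanMatrix ι) + c • (P - meanMatrix ι) * S := by
    rw [← hshift, ← pow_zero P, ← one_smul ℝ (P ^ 0 - meanMatrix ι), ← pow_zero c]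
    exact hs.tsum_eq_zero_add
  rw [sub_mul, one_mul]
  nth_rewrite 1 [hS]
  abel

theorem hasSum_pow_smul_pow_sub_meanMatrix (hP : P ∈ doublyStochastic ℝ ι) (hc0 : 0 ≤ c)
    (hc1 : c < 1) (hdet : IsUnit (1 - c • (P - meanMatrix ι)).det) :
    HasSum (fun t : ℕ => c ^ t • (P ^ t - meanMatrix ι))
      ((1 - c • (P - meanMatrix ι))⁻¹ * (1 - meanMatrix ι)) := by
  rw [← one_sub_smul_mul_tsum_pow_smul hP hc0 hc1, nonsing_inv_mul_cancel_left _ _ hdet]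
  exact (summable_pow_smul_pow_sub_meanMatrix hP hc0 hc1).hasSum

theorem tendsto_tsum_pow_sub_meanMatrix_mul_exp (hP : P ∈ doublyStochastic ℝ ι)
    (hconn : ∀ x : ι → ℝ, (∀ i j, P i j ≠ 0 → x i = x j) → ∀ i j, x i = x j) (i j : ι) :
    Tendsto (fun lam : ℝ => ∑' t : ℕ, ((P ^ t) i j - meanMatrix ι i j) * Real.exp (-lam * t))
      (𝓝[>] 0) (𝓝 (deviationMatrix P i j)) := by
  set B : ℝ → Matrix ι ι ℝ := fun lam => 1 - Real.exp (-lam) • (P - meanMatrix ι)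
  have hB : Continuous B := by fun_prop
  have hB0 : B 0 = 1 - (P - meanMatrix ι) := by simp [B]
  have hdet0 : IsUnit (B 0).det := hB0 ▸ isUnit_det_one_sub_sub_meanMatrix hP hconn
  have hcont : ContinuousAt (fun lam => ((B lam)⁻¹ * (1 - meanMatrix ι)) i j) 0 := by
    refine ((continuous_id.matrix_mul continuous_const).matrix_elem i j).continuousAt.comp
      ((continuousAt_matrix_inv _ ?_).comp hB.continuousAt)
    rw [Ring.inverse_eq_inv']
    exact continuousAt_inv₀ hdet0.ne_zero
  have hdet : ∀ᶠ lam in 𝓝 0, (B lam).det ≠ 0 :=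
    hB.matrix_det.continuousAt.eventually_ne hdet0.ne_zero
  have heq : (fun lam => ((B lam)⁻¹ * (1 - meanMatrix ι)) i j) =ᶠ[𝓝[>] 0]
      fun lam => ∑' t : ℕ, ((P ^ t) i j - meanMatrix ι i j) * Real.exp (-lam * t) := by
    filter_upwards [nhdsWithin_le_nhds hdet, self_mem_nhdsWithin] with lam hlam hpos
    have hsum := hasSum_pow_smul_pow_sub_meanMatrix hP (Real.exp_pos (-lam)).le
      (Real.exp_lt_one_iff.2 (neg_neg_of_pos hpos)) hlam.isUnit
    rw [← (Pi.hasSum.1 (Pi.hasSum.1 hsum i) j).tsum_eq]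
    refine tsum_congr fun t => ?_
    rw [mul_comm (-lam), Real.exp_nat_mul]
    simp [mul_comm]
  rw [deviationMatrix, ← hB0]
  exact (hcont.tendsto.mono_left nhdsWithin_le_nhds).congr' heq

end DoublyStochastic

section Reduced

variable {ι : Type*} [Fintype ι] [DecidableEq ι]

/-- The matrix `L_{oᶜoᶜ}` of the paper. -/
def reducedMatrix (L : Matrix ι ι ℝ) (o : ι) : Matrix {i // i ≠ o} {i // i ≠ o} ℝ :=
  L.submatrix (↑) (↑)

variable {L : Matrix ι ι ℝ} {o : ι}

theorem sum_subtype_ne_eq_sum {M : Type*} [AddCommMonoid M] {f : ι → M} (hf : f o = 0) :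
    ∑ i : {i // i ≠ o}, f i = ∑ i, f i := by
  rw [Fintype.sum_eq_add_sum_subtype_ne f o, hf, zero_add]

theorem isUnit_det_reducedMatrix (hL : ∀ x : ι → ℝ, x ⬝ᵥ L *ᵥ x = 0 → ∀ i j, x i = x j) :
    IsUnit (reducedMatrix L o).det := by
  rw [isUnit_iff_ne_zero, Ne, ← exists_mulVec_eq_zero_iff]
  rintro ⟨v, hv0, hv⟩
  set x : ι → ℝ := fun i => if h : i = o then 0 else v ⟨i, h⟩
  have hxo : x o = 0 := dif_pos rfl
  have hxv : ∀ i : {i // i ≠ o}, x i = v i := fun i => dif_neg i.2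
  have hLx : ∀ i : {i // i ≠ o}, (L *ᵥ x) i = 0 := fun i =>
    calc (L *ᵥ x) i = ∑ j : {j // j ≠ o}, L i j * x j :=
          (sum_subtype_ne_eq_sum (by rw [hxo, mul_zero])).symm
      _ = (reducedMatrix L o *ᵥ v) i := by simp only [hxv]; rfl
      _ = 0 := by rw [hv, Pi.zero_apply]
  have hquad : x ⬝ᵥ L *ᵥ x = 0 := by
    rw [dotProduct, ← sum_subtype_ne_eq_sum (by rw [hxo, zero_mul])]
    exact Finset.sum_eq_zero fun i _ => by rw [hLx, mul_zero]
  exact hv0 (funext fun i => by rw [← hxv, hL x hquad i o, hxo, Pi.zero_apply])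

theorem reducedMatrix_mulVec_sub (hL : L *ᵥ 1 = 0) (y : ι → ℝ) :
    reducedMatrix L o *ᵥ (fun i => y i - y o) = fun i : {i // i ≠ o} => (L *ᵥ y) i := by
  ext i
  have hrow : ∑ j, L i j = 0 := by simpa [mulVec, dotProduct] using congr_fun hL i
  calc (reducedMatrix L o *ᵥ (fun i => y i - y o)) i
      = ∑ j, L i j * (y j - y o) :=
        sum_subtype_ne_eq_sum (f := fun j => L i j * (y j - y o)) (by rw [sub_self, mul_zero])
    _ = (L *ᵥ y) i := by
        simp only [mul_sub, Finset.sum_sub_distrib, ← Finset.sum_mul, hrow, zero_mul, sub_zero]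
        rfl

theorem dotProduct_inv_reducedMatrix_mulVec (hL : L *ᵥ 1 = 0)
    (hdet : IsUnit (reducedMatrix L o).det) {k y : ι → ℝ} (hk : ∑ i, k i = 0)
    (hy : L *ᵥ y = k) :
    (fun i : {i // i ≠ o} => k i) ⬝ᵥ (reducedMatrix L o)⁻¹ *ᵥ (fun i => k i) = k ⬝ᵥ y := by
  have hz : (reducedMatrix L o)⁻¹ *ᵥ (fun i => k i) = fun i : {i // i ≠ o} => y i - y o := by
    rw [← hy, ← reducedMatrix_mulVec_sub hL, mulVec_mulVec, nonsing_inv_mul _ hdet, one_mulVec]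
  rw [hz]
  calc ∑ i : {i // i ≠ o}, k i * (y i - y o) = ∑ i, k i * (y i - y o) :=
        sum_subtype_ne_eq_sum (f := fun i => k i * (y i - y o)) (by rw [sub_self, mul_zero])
    _ = k ⬝ᵥ y := by
        simp only [mul_sub, Finset.sum_sub_distrib, ← Finset.sum_mul, hk, zero_mul, sub_zero]
        rfl

end Reduced

theorem List.sum_univ_count_eq_length {α : Type*} [Fintype α] [BEq α] [LawfulBEq α]
    (l : List α) : ∑ a, l.count a = l.length := by
  classical
  induction l with
  | nil => simp
  | cons b l ih => simp [List.count_cons, Finset.sum_add_distrib, ih, beq_iff_eq]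

section Torus

variable {N : ℕ}

theorem srwKernel_add_ne_zero {s : Torus N} (hs : s ∈ torusSteps N) (i : Torus N) :
    srwKernel N i (i + s) ≠ 0 := by
  simp [srwKernel, List.count_pos_iff.2 hs |>.ne']

theorem count_torusSteps_zero (hN : 2 ≤ N) : (torusSteps N).count 0 = 0 := by
  have : Fact (1 < N) := ⟨hN⟩
  simp [torusSteps]

theorem lap_eq (hN : 2 ≤ N) : lap N = (-4 : ℝ) • (1 - srwKernel N) := by
  ext i j
  by_cases h : i = j
  · subst h
    simp [lap, srwKernel, count_torusSteps_zero hN]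
  · simp [lap, srwKernel, h, one_apply]
    ring

variable [NeZero N]

theorem sum_count_torusSteps : ∑ v : Torus N, ((torusSteps N).count v : ℝ) = 4 := by
  rw [← Nat.cast_sum, List.sum_univ_count_eq_length]
  rfl

theorem srwKernel_mem_doublyStochastic : srwKernel N ∈ doublyStochastic ℝ (Torus N) := by
  have hrow (i : Torus N) : ∑ j, ((torusSteps N).count (j - i) : ℝ) = 4 :=
    ((Equiv.subRight i).sum_comp fun v => ((torusSteps N).count v : ℝ)).trans sum_count_torusSteps
  have hcol (j : Torus N) : ∑ i, ((torusSteps N).count (j - i) : ℝ) = 4 :=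
    ((Equiv.subLeft j).sum_comp fun v => ((torusSteps N).count v : ℝ)).trans sum_count_torusSteps
  refine mem_doublyStochastic_iff_sum.2 ⟨fun i j => by unfold srwKernel; positivity,
    fun i => ?_, fun j => ?_⟩
  all_goals unfold srwKernel; rw [← Finset.sum_div]; norm_num [hrow, hcol]

theorem eq_of_forall_srwKernel_ne_zero (x : Torus N → ℝ)
    (hx : ∀ i j, srwKernel N i j ≠ 0 → x i = x j) (i j : Torus N) : x i = x j := by
  have hshift : ∀ s ∈ torusSteps N, ∀ (n : ℕ) w, x (w + n • s) = x w := by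
    intro s hs n
    induction n with
    | zero => simp
    | succ n ih =>
      intro w
      rw [succ_nsmul, ← add_assoc, ← hx _ _ (srwKernel_add_ne_zero hs _), ih]
  have hx0 : ∀ v : Torus N, x v = x 0 := fun v => by
    have hv : v = 0 + v.1.val • ((1, 0) : Torus N) + v.2.val • ((0, 1) : Torus N) := by
      ext <;> simp
    rw [hv, hshift _ (by simp [torusSteps]), hshift _ (by simp [torusSteps])]
  rw [hx0 i, hx0 j]

end Torus

section Laplacian

variable {N : ℕ} [NeZero N]

theorem lap_mulVec_one (hN : 2 ≤ N) : lap N *ᵥ 1 = 0 := by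
  rw [lap_eq hN, smul_mulVec, sub_mulVec, one_mulVec,
    mulVec_one_of_mem_doublyStochastic srwKernel_mem_doublyStochastic, sub_self, smul_zero]

theorem eq_of_dotProduct_lap_mulVec_eq_zero (hN : 2 ≤ N) {x : Torus N → ℝ}
    (hx : x ⬝ᵥ lap N *ᵥ x = 0) (i j : Torus N) : x i = x j := by
  rw [lap_eq hN, smul_mulVec, dotProduct_smul, smul_eq_mul, mul_eq_zero] at hx
  exact eq_of_forall_srwKernel_ne_zero x (fun _ _ => eq_of_dotProduct_one_sub_mulVec_eq_zero
    srwKernel_mem_doublyStochastic (hx.resolve_left (by norm_num))) i j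

theorem lap_mulVec_deviationMatrix_mulVec (hN : 2 ≤ N) {k : Torus N → ℝ} (hk : ∑ i, k i = 0) :
    lap N *ᵥ (deviationMatrix (srwKernel N) *ᵥ k) = (-4 : ℝ) • k := by
  rw [lap_eq hN, smul_mulVec, mulVec_mulVec,
    one_sub_mul_deviationMatrix srwKernel_mem_doublyStochastic
      (isUnit_det_one_sub_sub_meanMatrix srwKernel_mem_doublyStochastic
        eq_of_forall_srwKernel_ne_zero),
    sub_mulVec, one_mulVec, meanMatrix_mulVec_eq_zero hk, sub_zero]

theorem green_eq_deviationMatrix (i j : Torus N) :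
    green N i j = deviationMatrix (srwKernel N) i j := by
  have hmean : meanMatrix (Torus N) i j = 1 / (N ^ 2 : ℝ) := by simp [meanMatrix, sq]
  rw [green, ← hmean]
  exact (tendsto_tsum_pow_sub_meanMatrix_mul_exp srwKernel_mem_doublyStochastic
    eq_of_forall_srwKernel_ne_zero i j).limUnder_eq

end Laplacian

/-- For `k` in the hyperplane `K_Λ = {k : ∑_i k_i = 0}`, writing `k_{0ᶜ}` for the restriction
to `Λ∖{0}`: `−4 k_{0ᶜ}ᵀ (Δ_{0ᶜ0ᶜ})⁻¹ k_{0ᶜ} = kᵀ G k`. -/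
theorem stmt9 (N : ℕ) [NeZero N] (hN : 2 ≤ N) (k : Torus N → ℝ)
    (hk : ∑ i : Torus N, k i = 0) :
    let Δ0 : Matrix {v : Torus N // v ≠ 0} {v : Torus N // v ≠ 0} ℝ :=
      fun i j => lap N (i : Torus N) (j : Torus N)
    (-4 : ℝ) * ((fun i : {v : Torus N // v ≠ 0} => k (i : Torus N)) ⬝ᵥ
          Δ0⁻¹.mulVec (fun i : {v : Torus N // v ≠ 0} => k (i : Torus N)))
      = ∑ i : Torus N, ∑ j : Torus N, k i * green N i j * k j := by
  intro Δ0
  set y := (-4 : ℝ)⁻¹ • deviationMatrix (srwKernel N) *ᵥ k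
  have hy : lap N *ᵥ y = k := by
    rw [mulVec_smul, lap_mulVec_deviationMatrix_mulVec hN hk, smul_smul,
      inv_mul_cancel₀ (by norm_num), one_smul]
  have hred := dotProduct_inv_reducedMatrix_mulVec (o := 0) (lap_mulVec_one hN)
    (isUnit_det_reducedMatrix fun _ => eq_of_dotProduct_lap_mulVec_eq_zero hN) hk hy
  change (-4 : ℝ) * (_ ⬝ᵥ (reducedMatrix (lap N) 0)⁻¹ *ᵥ _) = _
  rw [hred, dotProduct_smul, smul_eq_mul, ← mul_assoc, mul_inv_cancel₀ (by norm_num), one_mul]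
  simp [dotProduct, mulVec, Finset.mul_sum, green_eq_deviationMatrix, mul_assoc]
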